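/- Let ξ: ℝ/2πℤ → ℝ² be a trigonometric curve of degree k (each coordinate a real trigonometric polynomial of degree ≤ k), and let H be its hyperbolic set: the set of points x such that every line through x meets the curve in 2k points counted with multiplicity (i.e., for every unit vector v orthogonal to a direction, the trigonometric polynomial φ ↦ ⟨ξ(φ) − x, v⟩ has all 2k zeros real). Then H is convex. -/

import Mathlib

/-!
Fix a direction `v` and let `G = ⟨ξ, v⟩`, a real trigonometric polynomial; `x` is hyperbolic
iff for every `v` all solutions of `G ζ = ⟨x, v⟩` are real. If `G` has exact degree `M ≥ 1`,
the substitution `w = exp (ζ * I)` turns `G = r` into a polynomial equation of degree `2M`, and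
`r` is a real-rooted level iff all `2M` roots lie on the unit circle. The logarithmic derivative
then gives `Im (G' ζ / (G ζ - r)) < 0` whenever `Im ζ > 0`. If `G ζ = c` with `Im ζ > 0` and
`a < c < b` are real-rooted levels, `G' ζ / (c - a)` and `G' ζ / (c - b)` cannot both have
negative imaginary part, so the real-rooted levels form an interval and the hyperbolic set is an
intersection of slabs. If `G` is constant for some `v`, there are no hyperbolic points at all:
tilting `v` would make every level of the orthogonal projection real-rooted, which fails for
large levels.
-/

open Complex Polynomial ComplexConjugate

noncomputable def trigPoly (k : ℕ) (a b : ℕ → ℝ) (ζ : ℂ) : ℂ :=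
  ∑ j ∈ Finset.range (k + 1), ((a j : ℂ) * cos (j * ζ) + (b j : ℂ) * sin (j * ζ))

def IsRealLevel (f : ℂ → ℂ) (r : ℝ) : Prop :=
  ∀ ζ, f ζ = r → ζ.im = 0

section TrigPoly

variable {k M : ℕ} {a b : ℕ → ℝ}

theorem trigPoly_add_smul (k : ℕ) (a₁ b₁ a₂ b₂ : ℕ → ℝ) (α β : ℝ) (ζ : ℂ) :
    trigPoly k (α • a₁ + β • a₂) (α • b₁ + β • b₂) ζ =
      α * trigPoly k a₁ b₁ ζ + β * trigPoly k a₂ b₂ ζ := by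
  simp only [trigPoly, Finset.mul_sum, ← Finset.sum_add_distrib]
  refine Finset.sum_congr rfl fun j _ => ?_
  simp only [Pi.add_apply, Pi.smul_apply, smul_eq_mul]
  push_cast
  ring

theorem trigPoly_conj (ζ : ℂ) : trigPoly k a b (conj ζ) = conj (trigPoly k a b ζ) := by
  simp [trigPoly, ← cos_conj, ← sin_conj]

theorem norm_trigPoly_ofReal_le (θ : ℝ) :
    ‖trigPoly k a b θ‖ ≤ ∑ j ∈ Finset.range (k + 1), (|a j| + |b j|) := by
  refine (norm_sum_le _ _).trans (Finset.sum_le_sum fun j _ => (norm_add_le _ _).trans ?_)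
  have hcos := Real.abs_cos_le_one (j * θ)
  have hsin := Real.abs_sin_le_one (j * θ)
  simp only [norm_mul, norm_real, Real.norm_eq_abs, ← ofReal_natCast, ← ofReal_mul,
    ← ofReal_cos, ← ofReal_sin]
  gcongr <;> nlinarith [abs_nonneg (a j), abs_nonneg (b j)]

theorem trigPoly_const_or_exists_degree (k : ℕ) (a b : ℕ → ℝ) :
    (∀ ζ, trigPoly k a b ζ = a 0) ∨
      ∃ M, 1 ≤ M ∧ (a M ≠ 0 ∨ b M ≠ 0) ∧ trigPoly k a b = trigPoly M a b := by
  induction k with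
  | zero => exact Or.inl fun ζ => by simp [trigPoly]
  | succ k ih =>
    by_cases htop : a (k + 1) = 0 ∧ b (k + 1) = 0
    · have : trigPoly (k + 1) a b = trigPoly k a b := by
        ext ζ
        rw [trigPoly, Finset.sum_range_succ]
        simp [htop, trigPoly]
      rwa [this]
    · exact Or.inr ⟨k + 1, by omega, by tauto, rfl⟩

noncomputable def levelPoly (M : ℕ) (a b : ℕ → ℝ) (r : ℂ) : ℂ[X] :=
  ∑ j ∈ Finset.range (M + 1),
      (C ((a j - b j * I) / 2) * X ^ (M + j) + C ((a j + b j * I) / 2) * X ^ (M - j)) -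
    C r * X ^ M

theorem levelPoly_eval_exp (r ζ : ℂ) :
    (levelPoly M a b r).eval (exp (ζ * I)) = exp (M * ζ * I) * (trigPoly M a b ζ - r) := by
  have hpow (n : ℕ) : exp (ζ * I) ^ n = exp (n * ζ * I) := by
    rw [← exp_nat_mul]; ring_nf
  have hterm (j : ℕ) (hj : j ≤ M) :
      ((a j - b j * I) / 2) * exp (ζ * I) ^ (M + j) +
          ((a j + b j * I) / 2) * exp (ζ * I) ^ (M - j) =
        exp (M * ζ * I) * ((a j : ℂ) * cos (j * ζ) + (b j : ℂ) * sin (j * ζ)) := by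
    rw [hpow, hpow, Nat.cast_sub hj, cos, sin]
    push_cast
    simp only [add_mul, sub_mul, exp_add, exp_sub, neg_mul, exp_neg]
    field_simp
    ring_nf
  simp only [levelPoly, eval_sub, eval_finsetSum, eval_add, eval_mul, eval_C, eval_pow, eval_X]
  rw [Finset.sum_congr rfl fun j hj => hterm j (Finset.mem_range_succ_iff.mp hj),
    ← Finset.mul_sum, hpow, trigPoly]
  ring

theorem levelPoly_coeff_two_mul (hM : 1 ≤ M) (r : ℂ) :
    (levelPoly M a b r).coeff (2 * M) = (a M - b M * I) / 2 := by
  simp only [levelPoly, coeff_sub, finsetSum_coeff, coeff_add, coeff_C_mul, coeff_X_pow]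
  rw [Finset.sum_eq_single M, if_pos (by omega), if_neg (by omega), if_neg (by omega)]
  · ring
  · intro j hj hjM
    rw [Finset.mem_range] at hj
    rw [if_neg (by omega), if_neg (by omega)]
    ring
  · simp

theorem levelPoly_coeff_zero (hM : 1 ≤ M) (r : ℂ) :
    (levelPoly M a b r).coeff 0 = (a M + b M * I) / 2 := by
  simp only [levelPoly, coeff_sub, finsetSum_coeff, coeff_add, coeff_C_mul, coeff_X_pow]
  rw [Finset.sum_eq_single M, if_neg (by omega), if_pos (by omega), if_neg (by omega)]
  · ring
  · intro j hj hjM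
    rw [Finset.mem_range] at hj
    rw [if_neg (by omega), if_neg (by omega)]
    ring
  · simp

theorem natDegree_levelPoly_le (r : ℂ) : (levelPoly M a b r).natDegree ≤ 2 * M := by
  refine (natDegree_sub_le _ _).trans
    (max_le ?_ ((natDegree_C_mul_X_pow_le _ _).trans (by omega)))
  refine natDegree_sum_le_of_forall_le _ _ fun j hj => ?_
  rw [Finset.mem_range] at hj
  exact natDegree_add_le_of_degree_le ((natDegree_C_mul_X_pow_le _ _).trans (by omega))
    ((natDegree_C_mul_X_pow_le _ _).trans (by omega))

theorem natDegree_levelPoly (hM : 1 ≤ M) (hlead : a M ≠ 0 ∨ b M ≠ 0) (r : ℂ) :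
    (levelPoly M a b r).natDegree = 2 * M := by
  refine natDegree_eq_of_le_of_coeff_ne_zero (natDegree_levelPoly_le r) ?_
  rw [levelPoly_coeff_two_mul hM]
  simpa [Complex.ext_iff, or_iff_not_imp_left] using hlead

theorem levelPoly_ne_zero (hM : 1 ≤ M) (hlead : a M ≠ 0 ∨ b M ≠ 0) (r : ℂ) :
    levelPoly M a b r ≠ 0 :=
  ne_zero_of_natDegree_gt (n := 0) (by rw [natDegree_levelPoly hM hlead]; omega)

theorem card_roots_levelPoly (hM : 1 ≤ M) (hlead : a M ≠ 0 ∨ b M ≠ 0) (r : ℂ) :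
    Multiset.card (levelPoly M a b r).roots = 2 * M := by
  rw [IsAlgClosed.card_roots_eq_natDegree, natDegree_levelPoly hM hlead]

theorem ne_zero_of_mem_roots_levelPoly (hM : 1 ≤ M) (hlead : a M ≠ 0 ∨ b M ≠ 0) {r w : ℂ}
    (hw : w ∈ (levelPoly M a b r).roots) : w ≠ 0 := by
  rintro rfl
  rw [mem_roots (levelPoly_ne_zero hM hlead r), IsRoot, ← coeff_zero_eq_eval_zero,
    levelPoly_coeff_zero hM] at hw
  obtain ⟨h₁, h₂⟩ : a M = 0 ∧ b M = 0 := by simpa [Complex.ext_iff] using hw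
  exact hlead.elim (· h₁) (· h₂)

theorem exists_trigPoly_eq_of_isRoot {r w : ℂ} (hw0 : w ≠ 0)
    (hw : (levelPoly M a b r).IsRoot w) :
    ∃ ζ, trigPoly M a b ζ = r ∧ ζ.im = -Real.log ‖w‖ := by
  have hexp : exp (-log w * I * I) = w := by
    rw [mul_assoc, I_mul_I, mul_neg_one, neg_neg, exp_log hw0]
  refine ⟨-log w * I, ?_, by simp [log_re]⟩
  have h := levelPoly_eval_exp (M := M) (a := a) (b := b) r (-log w * I)
  rw [hexp, hw.eq_zero, eq_comm, mul_eq_zero] at h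
  exact sub_eq_zero.mp (h.resolve_left (exp_ne_zero _))

theorem norm_eq_one_of_mem_roots (hM : 1 ≤ M) (hlead : a M ≠ 0 ∨ b M ≠ 0) {r : ℝ}
    (hr : IsRealLevel (trigPoly M a b) r) {w : ℂ} (hw : w ∈ (levelPoly M a b r).roots) :
    ‖w‖ = 1 := by
  have hw0 := ne_zero_of_mem_roots_levelPoly hM hlead hw
  obtain ⟨ζ, hζ, him⟩ := exists_trigPoly_eq_of_isRoot hw0 (isRoot_of_mem_roots hw)
  exact Real.eq_one_of_pos_of_log_eq_zero (norm_pos_iff.mpr hw0) (by linarith [hr ζ hζ])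

theorem exists_not_isRealLevel (k : ℕ) (a b : ℕ → ℝ) :
    ∃ r : ℝ, ¬IsRealLevel (trigPoly k a b) r := by
  rcases trigPoly_const_or_exists_degree k a b with hconst | ⟨M, hM, hlead, hkM⟩
  · exact ⟨a 0, fun h => by simpa using h I (hconst I)⟩
  rw [hkM]
  set r : ℝ := 1 + ∑ j ∈ Finset.range (M + 1), (|a j| + |b j|)
  obtain ⟨w, hw⟩ := Multiset.card_pos_iff_exists_mem.mp
    (by rw [card_roots_levelPoly hM hlead r]; omega : 0 < Multiset.card (levelPoly M a b r).roots)
  obtain ⟨ζ, hζ, -⟩ := exists_trigPoly_eq_of_isRoot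
    (ne_zero_of_mem_roots_levelPoly hM hlead hw) (isRoot_of_mem_roots hw)
  refine ⟨r, fun hr => ?_⟩
  have hbound := norm_trigPoly_ofReal_le (k := M) (a := a) (b := b) ζ.re
  rw [conj_eq_iff_re.mp (conj_eq_iff_im.mpr (hr ζ hζ)), hζ, norm_real, Real.norm_eq_abs] at hbound
  linarith [le_abs_self r]

theorem isRealLevel_trigPoly_iff {r : ℝ} :
    IsRealLevel (trigPoly k a b) r ↔ ∀ ζ : ℂ, 0 < ζ.im → trigPoly k a b ζ ≠ r := by
  refine ⟨fun h ζ hζ hr => hζ.ne' (h ζ hr), fun h ζ hr => ?_⟩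
  rcases lt_trichotomy ζ.im 0 with hneg | hzero | hpos
  · exact absurd (by rw [trigPoly_conj, hr, conj_ofReal]) (h (conj ζ) (by simpa using hneg))
  · exact hzero
  · exact absurd hr (h ζ hpos)

theorem re_add_div_sub_neg {z w : ℂ} (h : ‖z‖ < ‖w‖) : ((z + w) / (z - w)).re < 0 := by
  have hzw : z - w ≠ 0 := fun h' => h.ne (by rw [sub_eq_zero.mp h'])
  have hnum : (z + w).re * (z - w).re + (z + w).im * (z - w).im = normSq z - normSq w := by
    simp only [add_re, sub_re, add_im, sub_im, normSq_apply]
    ring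
  rw [div_re, ← add_div, hnum, ← Complex.sq_norm, ← Complex.sq_norm]
  exact div_neg_of_neg_of_pos (by nlinarith [norm_nonneg z]) (normSq_pos.mpr hzw)

theorem hasDerivAt_trigPoly_sum_roots_levelPoly {r ζ : ℂ} (hr : trigPoly M a b ζ ≠ r) :
    HasDerivAt (trigPoly M a b) ((trigPoly M a b ζ - r) * (I * (exp (ζ * I) *
      ((levelPoly M a b r).roots.map fun w => 1 / (exp (ζ * I) - w)).sum - M))) ζ := by
  set P := levelPoly M a b r
  set z := exp (ζ * I)
  have hPz : P.eval z = exp (M * ζ * I) * (trigPoly M a b ζ - r) := levelPoly_eval_exp r ζ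
  have hexp_inv : exp (ζ * (-M * I)) * exp (M * ζ * I) = 1 := by rw [← exp_add]; ring_nf; simp
  have hG : trigPoly M a b = fun ξ => r + exp (ξ * (-M * I)) * P.eval (exp (ξ * I)) := by
    funext ξ
    rw [levelPoly_eval_exp, ← mul_assoc, ← exp_add]
    ring_nf
    simp
  have h : HasDerivAt (trigPoly M a b) (exp (ζ * (-M * I)) * (-M * I) * P.eval z +
      exp (ζ * (-M * I)) * (P.derivative.eval z * (z * I))) ζ := by
    rw [hG]
    exact ((hasDerivAt_mul_const _).cexp.mul
      ((P.hasDerivAt z).comp ζ (hasDerivAt_mul_const I).cexp)).const_add r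
  refine h.congr_deriv ?_
  rw [(IsAlgClosed.splits P).eval_derivative_eq_eval_mul_sum
    (by rw [hPz]; exact mul_ne_zero (exp_ne_zero _) (sub_ne_zero.mpr hr)), hPz]
  linear_combination (trigPoly M a b ζ - r) *
    (I * (z * (P.roots.map fun w => 1 / (z - w)).sum - M)) * hexp_inv

theorem im_deriv_div_sub_neg (hM : 1 ≤ M) (hlead : a M ≠ 0 ∨ b M ≠ 0) {r : ℝ}
    (hr : IsRealLevel (trigPoly M a b) r) {ζ : ℂ} (hζ : 0 < ζ.im) :
    (deriv (trigPoly M a b) ζ / (trigPoly M a b ζ - r)).im < 0 := by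
  set P := levelPoly M a b r
  set z := exp (ζ * I)
  set S := (P.roots.map fun w => 1 / (z - w)).sum
  have hz : ‖z‖ < 1 := by simpa [z, norm_exp] using hζ
  have hroots (w : ℂ) (hw : w ∈ P.roots) : ‖z‖ < ‖w‖ :=
    norm_eq_one_of_mem_roots hM hlead hr hw ▸ hz
  have hGr : trigPoly M a b ζ ≠ r := fun h => hζ.ne' (hr ζ h)
  have hsum : z * S - M = (P.roots.map fun w => (z + w) / (z - w)).sum / 2 := by
    have hterm (w : ℂ) (hw : w ∈ P.roots) : (z + w) / (z - w) = 2 * z * (1 / (z - w)) - 1 := by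
      have : z - w ≠ 0 := sub_ne_zero.mpr fun h => (hroots w hw).ne (by rw [h])
      field_simp
      ring
    rw [Multiset.map_congr rfl hterm, Multiset.sum_map_sub, Multiset.sum_map_mul_left,
      Multiset.map_const', Multiset.sum_replicate, card_roots_levelPoly hM hlead]
    ring
  have hne : P.roots ≠ 0 := by
    rw [← Multiset.card_pos, card_roots_levelPoly hM hlead]
    omega
  have hre := map_multiset_sum reAddGroupHom (P.roots.map fun w => (z + w) / (z - w))
  rw [coe_reAddGroupHom, Multiset.map_map] at hre
  rw [(hasDerivAt_trigPoly_sum_roots_levelPoly hGr).deriv,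
    mul_div_cancel_left₀ _ (sub_ne_zero.mpr hGr), I_mul_im, hsum, div_ofNat_re, hre]
  refine div_neg_of_neg_of_pos ?_ two_pos
  simpa using Multiset.sum_lt_sum_of_nonempty hne fun w hw => re_add_div_sub_neg (hroots w hw)

theorem ordConnected_setOf_isRealLevel (hM : 1 ≤ M) (hlead : a M ≠ 0 ∨ b M ≠ 0) :
    {r : ℝ | IsRealLevel (trigPoly M a b) r}.OrdConnected := by
  refine ⟨fun x hx y hy c ⟨hxc, hcy⟩ => ?_⟩
  rcases hxc.eq_or_lt with rfl | hxc
  · exact hx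
  rcases hcy.eq_or_lt with rfl | hcy
  · exact hy
  rw [Set.mem_ofPred_eq, isRealLevel_trigPoly_iff]
  intro ζ hζ hc
  have hx' := im_deriv_div_sub_neg hM hlead hx hζ
  have hy' := im_deriv_div_sub_neg hM hlead hy hζ
  rw [hc, ← ofReal_sub, div_ofReal_im] at hx' hy'
  have := (div_lt_iff₀ (sub_pos.mpr hxc)).mp hx'
  have := (div_lt_iff_of_neg (sub_neg.mpr hcy)).mp hy'
  linarith

end TrigPoly

def hyperbolicSet (Ξ₁ Ξ₂ : ℂ → ℂ) : Set (ℝ × ℝ) :=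
  {x | ∀ v : ℝ × ℝ, v.1 ^ 2 + v.2 ^ 2 = 1 →
    ∀ ζ : ℂ, (Ξ₁ ζ - (x.1 : ℂ)) * (v.1 : ℂ) + (Ξ₂ ζ - (x.2 : ℂ)) * (v.2 : ℂ) = 0 → ζ.im = 0}

theorem mem_hyperbolicSet_iff {Ξ₁ Ξ₂ : ℂ → ℂ} {x : ℝ × ℝ} :
    x ∈ hyperbolicSet Ξ₁ Ξ₂ ↔ ∀ v : ℝ × ℝ, v ≠ 0 →
      IsRealLevel (fun ζ => v.1 * Ξ₁ ζ + v.2 * Ξ₂ ζ) (v.1 * x.1 + v.2 * x.2) := by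
  constructor
  · intro hx v hv ζ hζ
    have hpos : 0 < v.1 ^ 2 + v.2 ^ 2 := by
      have : v.1 ≠ 0 ∨ v.2 ≠ 0 := by
        contrapose! hv
        exact Prod.ext hv.1 hv.2
      rcases this with h | h <;> positivity
    have hn : (√(v.1 ^ 2 + v.2 ^ 2) : ℂ) ≠ 0 := by exact_mod_cast (Real.sqrt_pos.mpr hpos).ne'
    refine hx (v.1 / √(v.1 ^ 2 + v.2 ^ 2), v.2 / √(v.1 ^ 2 + v.2 ^ 2)) ?_ ζ ?_
    · rw [div_pow, div_pow, Real.sq_sqrt hpos.le, ← add_div, div_self hpos.ne']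
    · push_cast at hζ ⊢
      field_simp
      linear_combination hζ
  · intro hx v hv ζ hζ
    refine hx v (by rintro rfl; simp at hv) ζ ?_
    push_cast
    linear_combination hζ

theorem hyperbolicSet_trigPoly_eq_empty {k : ℕ} {a₁ b₁ a₂ b₂ : ℕ → ℝ} {v : ℝ × ℝ} (hv : v ≠ 0)
    {g : ℝ} (hconst : ∀ ζ, v.1 * trigPoly k a₁ b₁ ζ + v.2 * trigPoly k a₂ b₂ ζ = g) :
    hyperbolicSet (trigPoly k a₁ b₁) (trigPoly k a₂ b₂) = ∅ := by
  refine Set.eq_empty_of_forall_notMem fun x hx => ?_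
  rw [mem_hyperbolicSet_iff] at hx
  set κ := g - (v.1 * x.1 + v.2 * x.2)
  by_cases hκ : κ = 0
  · have := hx v hv I (by dsimp only; rw [hconst]; exact_mod_cast sub_eq_zero.mp hκ)
    simp at this
  obtain ⟨r, hr⟩ := exists_not_isRealLevel k (-v.2 • a₁ + v.1 • a₂) (-v.2 • b₁ + v.1 • b₂)
  refine hr fun ζ hζ => ?_
  rw [trigPoly_add_smul] at hζ
  -- tilting `v` towards its normal turns the level `r` of the normal projection into a level
  -- of the tilted projection
  set lam := (-v.2 * x.1 + v.1 * x.2 - r) / κ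
  have hlam : lam * κ = -v.2 * x.1 + v.1 * x.2 - r := div_mul_cancel₀ _ hκ
  refine hx (lam * v.1 - v.2, lam * v.2 + v.1) ?_ ζ ?_
  · intro h
    simp only [Prod.ext_iff, Prod.fst_zero, Prod.snd_zero] at h
    have hsq : v.1 ^ 2 + v.2 ^ 2 = 0 := by linear_combination v.1 * h.2 - v.2 * h.1
    obtain ⟨h₁, h₂⟩ := (add_eq_zero_iff_of_nonneg (sq_nonneg _) (sq_nonneg _)).mp hsq
    exact hv (Prod.ext (by simpa using h₁) (by simpa using h₂))
  · have hlam' : (lam : ℂ) * κ = -v.2 * x.1 + v.1 * x.2 - r := by exact_mod_cast hlam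
    simp only [κ] at hlam'
    push_cast at hζ hlam' ⊢
    linear_combination (lam : ℂ) * hconst ζ + hζ + hlam'

theorem convex_hyperbolicSet_trigPoly (k : ℕ) (a₁ b₁ a₂ b₂ : ℕ → ℝ) :
    Convex ℝ (hyperbolicSet (trigPoly k a₁ b₁) (trigPoly k a₂ b₂)) := by
  intro x hx y hy s t hs ht hst
  refine mem_hyperbolicSet_iff.mpr fun v hv => ?_
  have hproj : (fun ζ => v.1 * trigPoly k a₁ b₁ ζ + v.2 * trigPoly k a₂ b₂ ζ) =
      trigPoly k (v.1 • a₁ + v.2 • a₂) (v.1 • b₁ + v.2 • b₂) :=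
    funext fun ζ => (trigPoly_add_smul k a₁ b₁ a₂ b₂ v.1 v.2 ζ).symm
  rcases trigPoly_const_or_exists_degree k (v.1 • a₁ + v.2 • a₂) (v.1 • b₁ + v.2 • b₂) with
    hconst | ⟨M, hM, hlead, hkM⟩
  · rw [hyperbolicSet_trigPoly_eq_empty hv fun ζ => congrFun hproj ζ ▸ hconst ζ] at hx
    exact hx.elim
  have hx' := mem_hyperbolicSet_iff.mp hx v hv
  have hy' := mem_hyperbolicSet_iff.mp hy v hv
  rw [hproj, hkM] at hx' hy' ⊢
  have hlevel : v.1 * (s • x + t • y).1 + v.2 * (s • x + t • y).2 =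
      s • (v.1 * x.1 + v.2 * x.2) + t • (v.1 * y.1 + v.2 * y.2) := by
    simp only [Prod.fst_add, Prod.snd_add, Prod.smul_fst, Prod.smul_snd, smul_eq_mul]
    ring
  rw [hlevel]
  exact (ordConnected_setOf_isRealLevel hM hlead).convex hx' hy' hs ht hst

theorem stmt_12 (k : ℕ) (a₁ b₁ a₂ b₂ : ℕ → ℝ)
    (Ξ₁ Ξ₂ : ℂ → ℂ)
    (hΞ₁ : ∀ ζ : ℂ, Ξ₁ ζ = ∑ j ∈ Finset.range (k + 1),
        ((a₁ j : ℂ) * Complex.cos (j * ζ) + (b₁ j : ℂ) * Complex.sin (j * ζ)))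
    (hΞ₂ : ∀ ζ : ℂ, Ξ₂ ζ = ∑ j ∈ Finset.range (k + 1),
        ((a₂ j : ℂ) * Complex.cos (j * ζ) + (b₂ j : ℂ) * Complex.sin (j * ζ)))
    (H : Set (ℝ × ℝ))
    (hH : H = {x : ℝ × ℝ | ∀ v : ℝ × ℝ, v.1 ^ 2 + v.2 ^ 2 = 1 →
        ∀ ζ : ℂ, (Ξ₁ ζ - (x.1 : ℂ)) * (v.1 : ℂ) + (Ξ₂ ζ - (x.2 : ℂ)) * (v.2 : ℂ) = 0 →
          ζ.im = 0}) :
    Convex ℝ H := by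
  obtain rfl : Ξ₁ = trigPoly k a₁ b₁ := funext hΞ₁
  obtain rfl : Ξ₂ = trigPoly k a₂ b₂ := funext hΞ₂
  exact hH ▸ convex_hyperbolicSet_trigPoly k a₁ b₁ a₂ b₂
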